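/- Let φ ∈ Möb(B), ζ ∈ S, and δ > 1. Then φ(Γ_δ(ζ)) ⊆ Γ_{δ̃}(φ(ζ)), where δ̃ := δ·(1+|φ(0)|)/(1−|φ(0)|) and φ also denotes the extension of φ to the closed unit ball. -/

import Mathlib

open MeasureTheory Metric Set Filter
open scoped ENNReal NNReal Topology InnerProductSpace Classical

noncomputable section

/-- Euclidean space `ℝⁿ`. -/
abbrev Eucl (n : ℕ) := EuclideanSpace ℝ (Fin n)

/-- The open unit ball `B` in `ℝⁿ`. -/
def uBall (n : ℕ) : Set (Eucl n) := Metric.ball 0 1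

/-- The unit sphere `S = ∂B` in `ℝⁿ`. -/
def uSphere (n : ℕ) : Set (Eucl n) := Metric.sphere 0 1

/-- The normalized surface area measure `σ` on the unit sphere (as a measure on `ℝⁿ`
supported on `S`), normalized so that `σ(S) = 1`. -/
def sphMeasure (n : ℕ) : Measure (Eucl n) :=
  ((Measure.hausdorffMeasure ((n : ℝ) - 1) (uSphere n))⁻¹ : ℝ≥0∞) •
    (Measure.hausdorffMeasure ((n : ℝ) - 1) : Measure (Eucl n)).restrict (uSphere n)

/-- `i`-th standard basis vector of `ℝⁿ`. -/
def basisV (n : ℕ) (i : Fin n) : Eucl n := EuclideanSpace.single i 1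

/-- The Laplacian `Δf(x) = ∑ᵢ ∂²f/∂xᵢ²(x)`. -/
def lap {n : ℕ} {F : Type*} [NormedAddCommGroup F] [NormedSpace ℝ F]
    (f : Eucl n → F) (x : Eucl n) : F :=
  ∑ i : Fin n, iteratedFDeriv ℝ 2 f x ![basisV n i, basisV n i]

/-- `f` is harmonic on `s`: twice continuously differentiable with vanishing Laplacian. -/
def HarmOn {n : ℕ} {F : Type*} [NormedAddCommGroup F] [NormedSpace ℝ F]
    (f : Eucl n → F) (s : Set (Eucl n)) : Prop :=
  ContDiffOn ℝ 2 f s ∧ ∀ x ∈ s, lap f x = 0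

/-- The Jacobian matrix `Dφ(x) = (∂φ⁽ⁱ⁾/∂xⱼ)` of a map `φ : ℝⁿ → ℝⁿ`. -/
def jacMatrix {n : ℕ} (φ : Eucl n → Eucl n) (x : Eucl n) : Matrix (Fin n) (Fin n) ℝ :=
  Matrix.of fun i j => fderiv ℝ φ x (basisV n j) i

/-- `|Dφ(x)| := |J_φ(x)|^{1/n}`, where `J_φ` is the Jacobian determinant. -/
def normDeriv {n : ℕ} (φ : Eucl n → Eucl n) (x : Eucl n) : ℝ :=
  |(jacMatrix φ x).det| ^ ((n : ℝ)⁻¹)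

/-- The weighted composition operator `W_{φ,ψ} f = ψ · (f ∘ φ)`. -/
def wco {n : ℕ} (φ : Eucl n → Eucl n) (ψ : Eucl n → ℂ) (f : Eucl n → ℂ) : Eucl n → ℂ :=
  fun x => ψ x * f (φ x)

/-- The set of values `(∫_S |f(rζ)|^p dσ(ζ))^{1/p}`, `0 ≤ r < 1`. -/
def hpNormSet (n : ℕ) (p : ℝ) (f : Eucl n → ℂ) : Set ℝ :=
  (fun r : ℝ => (∫ ζ, ‖f (r • ζ)‖ ^ p ∂(sphMeasure n)) ^ (1 / p)) '' Set.Ico (0 : ℝ) 1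

/-- The set of values `|f(x)|`, `x ∈ B`. -/
def hInfSet (n : ℕ) (f : Eucl n → ℂ) : Set ℝ := (fun x => ‖f x‖) '' uBall n

/-- Membership in the harmonic Hardy space `h^p(B)`, `1 ≤ p ≤ ∞`. -/
def MemHp (n : ℕ) (p : ℝ≥0∞) (f : Eucl n → ℂ) : Prop :=
  HarmOn f (uBall n) ∧
    if p = ⊤ then BddAbove (hInfSet n f) else BddAbove (hpNormSet n p.toReal f)

/-- The `h^p(B)` norm, `1 ≤ p ≤ ∞`. -/
def hpNorm (n : ℕ) (p : ℝ≥0∞) (f : Eucl n → ℂ) : ℝ :=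
  if p = ⊤ then sSup (hInfSet n f) else sSup (hpNormSet n p.toReal f)

/-- The operator norm of a map `T` on `h^p(B)`. -/
def opNormHp (n : ℕ) (p : ℝ≥0∞) (T : (Eucl n → ℂ) → (Eucl n → ℂ)) : ℝ :=
  sInf {C : ℝ | 0 ≤ C ∧ ∀ f, MemHp n p f → hpNorm n p (T f) ≤ C * hpNorm n p f}

/-- The one-point compactification `ℝ̂ⁿ = ℝⁿ ∪ {∞}`. -/
abbrev EuclHat (n : ℕ) := OnePoint (Eucl n)

/-- Reflection in the sphere `S(a, r)`, as a self-map of `ℝ̂ⁿ`: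
`x ↦ a + r²(x−a)/|x−a|²`, with `a ↦ ∞` and `∞ ↦ a`. -/
def sphereRefl (n : ℕ) (a : Eucl n) (r : ℝ) : EuclHat n → EuclHat n :=
  OnePoint.rec (↑a)
    (fun x => if x = a then OnePoint.infty
      else ↑(a + (r ^ 2 / ‖x - a‖ ^ 2) • (x - a)))

/-- Reflection in the hyperplane `{x : x·a = t}` (`a` a unit vector), as a self-map of `ℝ̂ⁿ`:
`x ↦ x − 2(x·a − t)a`, with `∞ ↦ ∞`. -/
def hyperRefl (n : ℕ) (a : Eucl n) (t : ℝ) : EuclHat n → EuclHat n :=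
  OnePoint.rec OnePoint.infty
    (fun x => ↑(x - (2 * (⟪x, a⟫_ℝ - t)) • a))

/-- A reflection of `ℝ̂ⁿ` in a sphere or a hyperplane. -/
def IsReflection (n : ℕ) (f : EuclHat n → EuclHat n) : Prop :=
  (∃ a r, 0 < r ∧ f = sphereRefl n a r) ∨
    (∃ a t, ‖a‖ = 1 ∧ f = hyperRefl n a t)

/-- A Möbius transformation of `ℝ̂ⁿ`: a finite composition of reflections in
spheres or hyperplanes. -/
def IsMobiusHat (n : ℕ) (g : EuclHat n → EuclHat n) : Prop :=
  ∃ L : List (EuclHat n → EuclHat n), L ≠ [] ∧ (∀ f ∈ L, IsReflection n f) ∧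
    g = L.foldr (· ∘ ·) id

/-- `φ : ℝⁿ → ℝⁿ` is, on `Ω`, the restriction of a Möbius transformation of `ℝ̂ⁿ`. -/
def IsMobiusRestr (n : ℕ) (φ : Eucl n → Eucl n) (Ω : Set (Eucl n)) : Prop :=
  ∃ g : EuclHat n → EuclHat n, IsMobiusHat n g ∧ ∀ x ∈ Ω, g ↑x = ↑(φ x)

/-- `φ ∈ Möb(B)`: `φ` agrees, on an open neighborhood of the closed unit ball, with a
Möbius transformation of `ℝ̂ⁿ`, and `φ` maps `B` bijectively onto `B`.  (Such a `φ` is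
the canonical extension of the Möbius transformation to the closed unit ball.) -/
def IsMobiusBall (n : ℕ) (φ : Eucl n → Eucl n) : Prop :=
  (∃ U : Set (Eucl n), IsOpen U ∧ Metric.closedBall 0 1 ⊆ U ∧ IsMobiusRestr n φ U) ∧
    Set.BijOn φ (uBall n) (uBall n)

/-- The nontangential approach region `Γ_δ(ζ) = {x ∈ B : |x − ζ| < (δ/2)(1 − |x|²)}`. -/
def ntRegion (n : ℕ) (δ : ℝ) (ζ : Eucl n) : Set (Eucl n) :=
  {x | x ∈ uBall n ∧ ‖x - ζ‖ < δ / 2 * (1 - ‖x‖ ^ 2)}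

/-- `g` has nontangential limit `L` at `ζ ∈ S`. -/
def HasNTLimit (n : ℕ) (g : Eucl n → ℂ) (ζ : Eucl n) (L : ℂ) : Prop :=
  ∀ δ : ℝ, 1 < δ → Filter.Tendsto g (nhdsWithin ζ (ntRegion n δ ζ)) (nhds L)

/-- The Poisson kernel `P(x, ζ) = (1 − |x|²)/|x − ζ|ⁿ` for the unit ball. -/
def poissonK (n : ℕ) (x ζ : Eucl n) : ℝ := (1 - ‖x‖ ^ 2) / ‖x - ζ‖ ^ n

/-- The extended Poisson kernel `P_y(x) = (1 − |x|²|y|²)/(1 − 2x·y + |x|²|y|²)^{n/2}`. -/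
def extPoisson (n : ℕ) (y x : Eucl n) : ℝ :=
  (1 - ‖x‖ ^ 2 * ‖y‖ ^ 2) / (1 - 2 * ⟪x, y⟫_ℝ + ‖x‖ ^ 2 * ‖y‖ ^ 2) ^ ((n : ℝ) / 2)

/-- The Gauss hypergeometric function `₂F₁(a, b; c; r) = ∑ₖ (a)ₖ(b)ₖ/((c)ₖ k!) rᵏ`. -/
def gaussHyper (a b c r : ℝ) : ℝ :=
  ∑' k : ℕ, ((ascPochhammer ℝ k).eval a * (ascPochhammer ℝ k).eval b) /
    ((ascPochhammer ℝ k).eval c * (Nat.factorial k)) * r ^ k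

/-- A linear operator on (the function class) `h^p(B)`. -/
def IsLinOnHp (n : ℕ) (p : ℝ≥0∞) (T : (Eucl n → ℂ) → (Eucl n → ℂ)) : Prop :=
  (∀ f, MemHp n p f → MemHp n p (T f)) ∧
    (∀ f g, MemHp n p f → MemHp n p g → T (f + g) = T f + T g) ∧
    (∀ (c : ℂ) (f), MemHp n p f → T (c • f) = c • T f)

/-- A compact operator on `h^p(B)`: a linear operator mapping the unit ball of `h^p(B)`
to a totally bounded set. -/
def IsCompactOnHp (n : ℕ) (p : ℝ≥0∞) (K : (Eucl n → ℂ) → (Eucl n → ℂ)) : Prop :=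
  IsLinOnHp n p K ∧
    ∀ ε : ℝ, 0 < ε → ∃ G : Finset (Eucl n → ℂ),
      ∀ f, MemHp n p f → hpNorm n p f ≤ 1 → ∃ g ∈ G, hpNorm n p (K f - g) ≤ ε

/-- The essential norm of an operator `T` on `h^p(B)`: the distance, in operator norm,
from `T` to the compact operators on `h^p(B)`. -/
def essNormHp (n : ℕ) (p : ℝ≥0∞) (T : (Eucl n → ℂ) → (Eucl n → ℂ)) : ℝ :=
  sInf {c : ℝ | ∃ K, IsCompactOnHp n p K ∧ opNormHp n p (fun f => T f - K f) = c}

/-- The duality pairing `⟨f, g⟩ = ∫_S f* g* dσ`, relative to a boundary-function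
assignment `bd`. -/
def hpPairing (n : ℕ) (bd : (Eucl n → ℂ) → (Eucl n → ℂ)) (f g : Eucl n → ℂ) : ℂ :=
  ∫ ζ, bd f ζ * bd g ζ ∂(sphMeasure n)

end

/-!
Off finitely many points, a composition of reflections is a map `G` of `ℝⁿ` with a conformal
factor `μ > 0`, `‖G x - G y‖² = μ x μ y ‖x - y‖²`, such that `‖G x - c‖² / μ x` and `1 / μ x`
are quadratic polynomials in `x`. For `φ ∈ Möb(B)` the quadratic `(1 - ‖G x‖²) / μ x` is positive
in `B` and negative outside `B̄`, so it vanishes on `S` and equals `γ (1 - ‖x‖²)`. Letting `y`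
tend to `a = φ⁻¹(0)` in the distance identity gives
`μ x (γ² (1 - ‖a‖²)(1 - ‖x‖²) + ‖x - a‖²) = γ (1 - ‖a‖²)`, and positivity of the left factor
forces `γ ≤ 1`. The same holds for `φ⁻¹`, and the chain rule for `μ` gives `γ γ' = 1`, so
`γ = 1`. Hence, with `[x, a]² = 1 - 2⟪x, a⟫ + ‖x‖²‖a‖²`, on the closed ball
`(1 - ‖φ x‖²) [x, a]² = (1 - ‖a‖²)(1 - ‖x‖²)` and
`‖φ x - φ y‖² [x, a]² [y, a]² = (1 - ‖a‖²)² ‖x - y‖²`; in particular `‖φ 0‖ = ‖a‖`.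
Together with `(1 - ‖a‖)² ≤ [x, a]² ≤ (1 + ‖a‖)²` this bounds the ratio
`‖φ x - φ ζ‖ / (1 - ‖φ x‖²)` by `(1 + ‖a‖)/(1 - ‖a‖)` times `‖x - ζ‖ / (1 - ‖x‖²)`.
-/

open OnePoint Bornology

section Inversion

variable {V : Type*} [NormedAddCommGroup V] [InnerProductSpace ℝ V]

noncomputable def sphereInv (a : V) (r : ℝ) (u : V) : V :=
  a + (r ^ 2 / ‖u - a‖ ^ 2) • (u - a)

def hyperReflect (a : V) (t : ℝ) (u : V) : V :=
  u - (2 * (⟪u, a⟫_ℝ - t)) • a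

lemma sphereInv_sub (a : V) (r : ℝ) (u : V) :
    sphereInv a r u - a = (r ^ 2 / ‖u - a‖ ^ 2) • (u - a) := by
  simp [sphereInv]

lemma norm_sphereInv_sub (a : V) (r : ℝ) (u : V) :
    ‖sphereInv a r u - a‖ = r ^ 2 / ‖u - a‖ := by
  rw [sphereInv_sub, norm_smul, Real.norm_eq_abs, abs_of_nonneg (by positivity)]
  rcases eq_or_ne u a with rfl | h
  · simp
  · have : ‖u - a‖ ≠ 0 := norm_ne_zero_iff.2 (sub_ne_zero.2 h)
    field_simp

lemma sphereInv_ne {a u : V} {r : ℝ} (hr : r ≠ 0) (h : u ≠ a) : sphereInv a r u ≠ a := by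
  intro h0
  have hpos : 0 < r ^ 2 / ‖u - a‖ := div_pos (by positivity) (norm_pos_iff.2 (sub_ne_zero.2 h))
  rw [← norm_sphereInv_sub, h0, sub_self, norm_zero] at hpos
  exact lt_irrefl 0 hpos

lemma sphereInv_sphereInv {a u : V} {r : ℝ} (hr : r ≠ 0) (h : u ≠ a) :
    sphereInv a r (sphereInv a r u) = u := by
  have hu : ‖u - a‖ ≠ 0 := norm_ne_zero_iff.2 (sub_ne_zero.2 h)
  have hnorm : ‖sphereInv a r u - a‖ ^ 2 = r ^ 4 / ‖u - a‖ ^ 2 := by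
    rw [norm_sphereInv_sub]; ring
  rw [sphereInv, hnorm, sphereInv_sub, smul_smul]
  have hc : r ^ 2 / (r ^ 4 / ‖u - a‖ ^ 2) * (r ^ 2 / ‖u - a‖ ^ 2) = 1 := by
    field_simp
  rw [hc, one_smul, add_sub_cancel]

lemma norm_smul_sub_smul_sq {p q : V} (r : ℝ) (hp : p ≠ 0) (hq : q ≠ 0) :
    ‖(r ^ 2 / ‖p‖ ^ 2) • p - (r ^ 2 / ‖q‖ ^ 2) • q‖ ^ 2
      = (r ^ 2 / ‖p‖ ^ 2) * (r ^ 2 / ‖q‖ ^ 2) * ‖p - q‖ ^ 2 := by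
  have hp2 : ‖p‖ ≠ 0 := norm_ne_zero_iff.2 hp
  have hq2 : ‖q‖ ≠ 0 := norm_ne_zero_iff.2 hq
  rw [norm_sub_sq_real, norm_sub_sq_real, real_inner_smul_left, real_inner_smul_right,
    norm_smul, norm_smul, Real.norm_of_nonneg (div_nonneg (sq_nonneg r) (sq_nonneg ‖p‖)),
    Real.norm_of_nonneg (div_nonneg (sq_nonneg r) (sq_nonneg ‖q‖))]
  field_simp
  ring

lemma norm_sphereInv_sub_sphereInv_sq {a u v : V} (r : ℝ) (hu : u ≠ a) (hv : v ≠ a) :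
    ‖sphereInv a r u - sphereInv a r v‖ ^ 2
      = (r ^ 2 / ‖u - a‖ ^ 2) * (r ^ 2 / ‖v - a‖ ^ 2) * ‖u - v‖ ^ 2 := by
  have hd : sphereInv a r u - sphereInv a r v
      = (r ^ 2 / ‖u - a‖ ^ 2) • (u - a) - (r ^ 2 / ‖v - a‖ ^ 2) • (v - a) := by
    simp only [sphereInv]; abel
  rw [hd, norm_smul_sub_smul_sq r (sub_ne_zero.2 hu) (sub_ne_zero.2 hv), sub_sub_sub_cancel_right]

lemma norm_sphereInv_sub_sq {a u : V} (c : V) {r : ℝ} (hr : r ≠ 0) (hu : u ≠ a) :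
    ‖sphereInv a r u - c‖ ^ 2 = (r ^ 2 / ‖u - a‖ ^ 2) *
      ((‖a - c‖ ^ 2 / r ^ 2) * ‖u - a‖ ^ 2 + 2 * ⟪a - c, u - a⟫_ℝ + r ^ 2) := by
  have hu1 : ‖u - a‖ ≠ 0 := norm_ne_zero_iff.2 (sub_ne_zero.2 hu)
  have hd : sphereInv a r u - c = (a - c) + (r ^ 2 / ‖u - a‖ ^ 2) • (u - a) := by
    simp only [sphereInv]; abel
  rw [hd, norm_add_sq_real, real_inner_smul_right, norm_smul,
    Real.norm_of_nonneg (div_nonneg (sq_nonneg r) (sq_nonneg _))]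
  field_simp

lemma continuousAt_sphereInv {a u : V} (r : ℝ) (h : u ≠ a) : ContinuousAt (sphereInv a r) u := by
  have hu : ‖u - a‖ ^ 2 ≠ 0 := pow_ne_zero 2 (norm_ne_zero_iff.2 (sub_ne_zero.2 h))
  unfold sphereInv
  fun_prop (disch := exact hu)

lemma tendsto_sphereInv_cobounded (a : V) (r : ℝ) :
    Tendsto (sphereInv a r) (cobounded V) (𝓝 a) := by
  have hnorm : Tendsto (fun u => ‖u - a‖) (cobounded V) atTop :=
    tendsto_norm_atTop_iff_cobounded.2 (tendsto_sub_const_cobounded a)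
  rw [tendsto_iff_norm_sub_tendsto_zero]
  simpa only [norm_sphereInv_sub] using tendsto_const_nhds.div_atTop hnorm

lemma tendsto_sphereInv_nhdsNE (a : V) {r : ℝ} (hr : r ≠ 0) :
    Tendsto (sphereInv a r) (𝓝[≠] a) (cobounded V) := by
  have hlarge : Tendsto (fun u => r ^ 2 / ‖u - a‖) (𝓝[≠] a) atTop := by
    simp_rw [div_eq_mul_inv]
    exact (tendsto_norm_sub_self_nhdsNE a).inv_tendsto_nhdsGT_zero.const_mul_atTop (by positivity)
  have hsub : Tendsto (fun u => sphereInv a r u - a) (𝓝[≠] a) (cobounded V) := by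
    rw [← tendsto_norm_atTop_iff_cobounded]
    simpa only [norm_sphereInv_sub] using hlarge
  convert (tendsto_add_const_cobounded a).comp hsub using 1
  ext u
  simp

lemma hyperReflect_sub_hyperReflect (a : V) (t : ℝ) (u v : V) :
    hyperReflect a t u - hyperReflect a t v = (u - v) - (2 * ⟪u - v, a⟫_ℝ) • a := by
  simp only [hyperReflect, inner_sub_left]
  module

lemma isometry_hyperReflect {a : V} (ha : ‖a‖ = 1) (t : ℝ) : Isometry (hyperReflect a t) := by
  refine Isometry.of_dist_eq fun u v => ?_
  rw [dist_eq_norm, dist_eq_norm, ← sq_eq_sq₀ (norm_nonneg _) (norm_nonneg _),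
    hyperReflect_sub_hyperReflect, norm_sub_sq_real, real_inner_smul_right, norm_smul,
    Real.norm_eq_abs, mul_pow, ha, sq_abs]
  ring

lemma hyperReflect_involutive {a : V} (ha : ‖a‖ = 1) (t : ℝ) :
    Function.Involutive (hyperReflect a t) := by
  intro u
  have haa : ⟪a, a⟫_ℝ = 1 := by rw [real_inner_self_eq_norm_sq, ha, one_pow]
  have h : ⟪hyperReflect a t u, a⟫_ℝ = 2 * t - ⟪u, a⟫_ℝ := by
    simp only [hyperReflect, inner_sub_left, real_inner_smul_left, haa]
    ring
  rw [hyperReflect, h]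
  simp only [hyperReflect]
  module

end Inversion


section Reflection

variable {n : ℕ}

lemma sphereRefl_coe_of_ne {a x : Eucl n} (r : ℝ) (h : x ≠ a) :
    sphereRefl n a r x = ↑(sphereInv a r x) :=
  if_neg h

lemma sphereRefl_coe_self (a : Eucl n) (r : ℝ) : sphereRefl n a r a = (∞ : EuclHat n) :=
  if_pos rfl

lemma sphereRefl_infty (a : Eucl n) (r : ℝ) : sphereRefl n a r ∞ = a :=
  rfl

lemma hyperRefl_eq_map (a : Eucl n) (t : ℝ) :
    hyperRefl n a t = OnePoint.map (hyperReflect a t) := by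
  funext z
  induction z using OnePoint.rec <;> rfl

lemma cobounded_eq_coclosedCompact {X : Type*} [MetricSpace X] [ProperSpace X] :
    cobounded X = coclosedCompact X := by
  rw [coclosedCompact_eq_cocompact, Metric.cobounded_eq_cocompact]

lemma continuous_sphereRefl (a : Eucl n) {r : ℝ} (hr : r ≠ 0) :
    Continuous (sphereRefl n a r) := by
  rw [OnePoint.continuous_iff, ← cobounded_eq_coclosedCompact]
  refine ⟨?_, continuous_iff_continuousAt.2 fun x => ?_⟩
  · refine ((continuous_coe.tendsto a).comp (tendsto_sphereInv_cobounded a r)).congr' ?_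
    filter_upwards [eventually_ne_cobounded a] with x hx
    exact (sphereRefl_coe_of_ne r hx).symm
  rcases eq_or_ne x a with rfl | hx
  · rw [ContinuousAt, sphereRefl_coe_self, ← nhdsNE_sup_pure x, tendsto_sup]
    refine ⟨?_, by
      simpa [sphereRefl_coe_self] using tendsto_pure_nhds (fun y : Eucl n => sphereRefl n x r y) x⟩
    have h := tendsto_sphereInv_nhdsNE x hr
    rw [cobounded_eq_coclosedCompact] at h
    refine (tendsto_coe_infty.comp h).congr' (eventually_nhdsWithin_of_forall fun y hy => ?_)
    exact (sphereRefl_coe_of_ne r hy).symm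
  · refine (continuous_coe.continuousAt.comp (continuousAt_sphereInv r hx)).congr ?_
    filter_upwards [eventually_ne_nhds hx] with y hy
    exact (sphereRefl_coe_of_ne r hy).symm

lemma continuous_hyperRefl {a : Eucl n} (ha : ‖a‖ = 1) (t : ℝ) :
    Continuous (hyperRefl n a t) := by
  have hi := isometry_hyperReflect ha t
  rw [hyperRefl_eq_map]
  refine OnePoint.continuous_map hi.continuous ?_
  rw [← cobounded_eq_coclosedCompact]
  exact hi.antilipschitz.tendsto_cobounded

lemma IsReflection.continuous {f : EuclHat n → EuclHat n} (hf : IsReflection n f) :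
    Continuous f := by
  rcases hf with ⟨a, r, hr, rfl⟩ | ⟨a, t, ha, rfl⟩
  · exact continuous_sphereRefl a hr.ne'
  · exact continuous_hyperRefl ha t

lemma IsReflection.involutive {f : EuclHat n → EuclHat n} (hf : IsReflection n f) :
    Function.Involutive f := by
  rcases hf with ⟨a, r, hr, rfl⟩ | ⟨a, t, ha, rfl⟩
  · intro z
    induction z using OnePoint.rec with
    | infty => rw [sphereRefl_infty, sphereRefl_coe_self]
    | coe x =>
      rcases eq_or_ne x a with rfl | h
      · rw [sphereRefl_coe_self, sphereRefl_infty]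
      · rw [sphereRefl_coe_of_ne r h, sphereRefl_coe_of_ne r (sphereInv_ne hr.ne' h),
          sphereInv_sphereInv hr.ne' h]
  · intro z
    induction z using OnePoint.rec with
    | infty => rfl
    | coe x => exact congrArg _ (hyperReflect_involutive ha t x)

lemma IsMobiusHat.continuous {g : EuclHat n → EuclHat n} (hg : IsMobiusHat n g) :
    Continuous g := by
  obtain ⟨L, -, hL, rfl⟩ := hg
  induction L with
  | nil => exact continuous_id
  | cons f T ih =>
    exact (hL f List.mem_cons_self).continuous.comp
      (ih fun f hf => hL f (List.mem_cons_of_mem _ hf))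

lemma List.foldr_comp_eq_comp {α : Type*} (L : List (α → α)) (h : α → α) :
    L.foldr (· ∘ ·) h = L.foldr (· ∘ ·) id ∘ h := by
  induction L with
  | nil => rfl
  | cons f T ih => simp only [List.foldr_cons, ih]; rfl

lemma List.leftInverse_foldr_reverse {α : Type*} {L : List (α → α)}
    (hL : ∀ f ∈ L, Function.Involutive f) :
    Function.LeftInverse (L.reverse.foldr (· ∘ ·) id) (L.foldr (· ∘ ·) id) := by
  induction L with
  | nil => exact fun _ => rfl
  | cons f T ih =>
    intro z
    rw [List.reverse_cons, List.foldr_append, List.foldr_comp_eq_comp]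
    simp only [List.foldr_cons, List.foldr_nil, Function.comp_apply, id_eq,
      hL f List.mem_cons_self _]
    exact ih (fun f hf => hL f (List.mem_cons_of_mem _ hf)) z

lemma IsMobiusHat.exists_homeomorph {g : EuclHat n → EuclHat n} (hg : IsMobiusHat n g) :
    ∃ h : EuclHat n ≃ₜ EuclHat n, ⇑h = g ∧ IsMobiusHat n h.symm := by
  obtain ⟨L, hne, hL, rfl⟩ := hg
  have hL' : ∀ f ∈ L.reverse, IsReflection n f := fun f hf => hL f (List.mem_reverse.1 hf)
  have hright := List.leftInverse_foldr_reverse fun f hf => (hL' f hf).involutive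
  rw [List.reverse_reverse] at hright
  exact ⟨⟨⟨_, _, List.leftInverse_foldr_reverse fun f hf => (hL f hf).involutive, hright⟩,
    IsMobiusHat.continuous ⟨L, hne, hL, rfl⟩,
    IsMobiusHat.continuous ⟨L.reverse, by simpa using hne, hL', rfl⟩⟩,
    rfl, L.reverse, by simpa using hne, hL', rfl⟩

end Reflection

section Chart

def IsMulQuadraticOff {V : Type*} [NormedAddCommGroup V] [InnerProductSpace ℝ V]
    (E : Set V) (μ F : V → ℝ) : Prop :=
  ∃ (α c : ℝ) (β : V), ∀ x ∉ E, F x = μ x * (α * ‖x‖ ^ 2 + ⟪β, x⟫_ℝ + c)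

namespace IsMulQuadraticOff

variable {V : Type*} [NormedAddCommGroup V] [InnerProductSpace ℝ V] {E E' : Set V}
  {μ F F₁ F₂ : V → ℝ}

lemma const_mul_add_const_mul (h₁ : IsMulQuadraticOff E μ F₁) (h₂ : IsMulQuadraticOff E μ F₂)
    (c₁ c₂ : ℝ) : IsMulQuadraticOff E μ (fun x => c₁ * F₁ x + c₂ * F₂ x) := by
  obtain ⟨α₁, γ₁, β₁, h₁⟩ := h₁
  obtain ⟨α₂, γ₂, β₂, h₂⟩ := h₂
  refine ⟨c₁ * α₁ + c₂ * α₂, c₁ * γ₁ + c₂ * γ₂, c₁ • β₁ + c₂ • β₂, fun x hx => ?_⟩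
  simp only [h₁ x hx, h₂ x hx, inner_add_left, real_inner_smul_left, real_inner_smul_left]
  ring

lemma congr (h : IsMulQuadraticOff E μ F) (hF : ∀ x ∉ E, F₁ x = F x) :
    IsMulQuadraticOff E μ F₁ := by
  obtain ⟨α, γ, β, h⟩ := h
  exact ⟨α, γ, β, fun x hx => by rw [hF x hx, h x hx]⟩

lemma mul (h : IsMulQuadraticOff E μ F) (hE : E ⊆ E') {l : V → ℝ}
    (hF : ∀ x ∉ E', F₁ x = l x * F x) : IsMulQuadraticOff E' (fun x => μ x * l x) F₁ := by
  obtain ⟨α, γ, β, h⟩ := h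
  exact ⟨α, γ, β, fun x hx => by simp only [hF x hx, h x fun hxE => hx (hE hxE)]; ring⟩

end IsMulQuadraticOff

/-- Off the finite set `E`, `g` is a map `G` of `ℝⁿ` with conformal factor `μ`. The invariant that
drives the argument, and survives composition with reflections, is that `‖G x - c‖² / μ x`
(for every `c`) and `1 / μ x` are quadratic polynomials in `x`. -/
structure MobiusChart (n : ℕ) (g : EuclHat n → EuclHat n) where
  E : Set (Eucl n)
  G : Eucl n → Eucl n
  μ : Eucl n → ℝ
  finite_E : E.Finite
  apply_coe : ∀ x ∉ E, g x = G x
  μ_pos : ∀ x ∉ E, 0 < μ x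
  norm_sub_sq : ∀ x ∉ E, ∀ y ∉ E, ‖G x - G y‖ ^ 2 = μ x * μ y * ‖x - y‖ ^ 2
  isMulQuadraticOff_norm_sub_sq : ∀ c, IsMulQuadraticOff E μ (fun x => ‖G x - c‖ ^ 2)
  isMulQuadraticOff_one : IsMulQuadraticOff E μ 1

namespace MobiusChart

variable {n : ℕ} {g : EuclHat n → EuclHat n} (cd : MobiusChart n g)

lemma injOn_G : InjOn cd.G cd.Eᶜ := by
  intro x hx y hy hxy
  have h := cd.norm_sub_sq x hx y hy
  rw [hxy, sub_self, norm_zero, zero_pow two_ne_zero, eq_comm] at h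
  have hμ : cd.μ x * cd.μ y ≠ 0 := (mul_pos (cd.μ_pos x hx) (cd.μ_pos y hy)).ne'
  simpa [sub_eq_zero, hμ] using h

lemma finite_compl_inter_preimage {F : Set (Eucl n)} (hF : F.Finite) :
    (cd.Eᶜ ∩ cd.G ⁻¹' F).Finite :=
  Finite.of_finite_image (hF.subset (image_subset_iff.2 fun _ hx => hx.2))
    (cd.injOn_G.mono inter_subset_left)

lemma isMulQuadraticOff_inner (b : Eucl n) :
    IsMulQuadraticOff cd.E cd.μ (fun x => ⟪b, cd.G x⟫_ℝ) := by
  refine (((cd.isMulQuadraticOff_norm_sub_sq 0).const_mul_add_const_mul cd.isMulQuadraticOff_one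
    (1 / 2) (‖b‖ ^ 2 / 2)).const_mul_add_const_mul (cd.isMulQuadraticOff_norm_sub_sq b) 1
    (-(1 / 2))).congr fun x _ => ?_
  rw [Pi.one_apply, sub_zero, norm_sub_sq_real, real_inner_comm]
  ring

noncomputable def refl (n : ℕ) : MobiusChart n id where
  E := ∅
  G := id
  μ := 1
  finite_E := finite_empty
  apply_coe _ _ := rfl
  μ_pos _ _ := one_pos
  norm_sub_sq _ _ _ _ := by simp
  isMulQuadraticOff_norm_sub_sq c := ⟨1, ‖c‖ ^ 2, -(2 : ℝ) • c, fun x _ => by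
    simp only [id_eq, Pi.one_apply]
    rw [norm_sub_sq_real, real_inner_smul_left, real_inner_comm]
    ring⟩
  isMulQuadraticOff_one := ⟨0, 1, 0, fun x _ => by simp⟩

lemma notMem_and_ne_of_notMem {a x : Eucl n} (hx : x ∉ cd.E ∪ (cd.Eᶜ ∩ cd.G ⁻¹' {a})) :
    x ∉ cd.E ∧ cd.G x ≠ a := by
  simp only [mem_union, mem_inter_iff, mem_compl_iff, mem_preimage, mem_singleton_iff,
    not_or, not_and] at hx
  exact ⟨hx.1, hx.2 hx.1⟩

noncomputable def compSphereRefl (a : Eucl n) {r : ℝ} (hr : r ≠ 0) :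
    MobiusChart n (sphereRefl n a r ∘ g) where
  E := cd.E ∪ (cd.Eᶜ ∩ cd.G ⁻¹' {a})
  G x := sphereInv a r (cd.G x)
  μ x := cd.μ x * (r ^ 2 / ‖cd.G x - a‖ ^ 2)
  finite_E := cd.finite_E.union (cd.finite_compl_inter_preimage (finite_singleton a))
  apply_coe x hx := by
    obtain ⟨hxE, hxa⟩ := cd.notMem_and_ne_of_notMem hx
    rw [Function.comp_apply, cd.apply_coe x hxE, sphereRefl_coe_of_ne r hxa]
  μ_pos x hx := by
    obtain ⟨hxE, hxa⟩ := cd.notMem_and_ne_of_notMem hx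
    have : 0 < ‖cd.G x - a‖ := norm_pos_iff.2 (sub_ne_zero.2 hxa)
    exact mul_pos (cd.μ_pos x hxE) (by positivity)
  norm_sub_sq x hx y hy := by
    obtain ⟨hxE, hxa⟩ := cd.notMem_and_ne_of_notMem hx
    obtain ⟨hyE, hya⟩ := cd.notMem_and_ne_of_notMem hy
    rw [norm_sphereInv_sub_sphereInv_sq r hxa hya, cd.norm_sub_sq x hxE y hyE]
    ring
  isMulQuadraticOff_norm_sub_sq c := by
    refine ((cd.isMulQuadraticOff_norm_sub_sq a).const_mul_add_const_mul
      ((cd.isMulQuadraticOff_inner (a - c)).const_mul_add_const_mul cd.isMulQuadraticOff_one 2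
        (r ^ 2 - 2 * ⟪a - c, a⟫_ℝ)) (‖a - c‖ ^ 2 / r ^ 2) 1).mul subset_union_left
      fun x hx => ?_
    obtain ⟨-, hxa⟩ := cd.notMem_and_ne_of_notMem hx
    rw [norm_sphereInv_sub_sq c hr hxa, inner_sub_right, Pi.one_apply]
    ring
  isMulQuadraticOff_one := by
    refine ((cd.isMulQuadraticOff_norm_sub_sq a).const_mul_add_const_mul cd.isMulQuadraticOff_one
      (1 / r ^ 2) 0).mul subset_union_left fun x hx => ?_
    obtain ⟨-, hxa⟩ := cd.notMem_and_ne_of_notMem hx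
    have : ‖cd.G x - a‖ ≠ 0 := norm_ne_zero_iff.2 (sub_ne_zero.2 hxa)
    simp only [Pi.one_apply]
    field_simp
    ring

noncomputable def compHyperRefl {a : Eucl n} (ha : ‖a‖ = 1) (t : ℝ) :
    MobiusChart n (hyperRefl n a t ∘ g) where
  E := cd.E
  G x := hyperReflect a t (cd.G x)
  μ := cd.μ
  finite_E := cd.finite_E
  apply_coe x hx := by rw [Function.comp_apply, cd.apply_coe x hx, hyperRefl_eq_map, map_some]
  μ_pos := cd.μ_pos
  norm_sub_sq x hx y hy := by
    rw [← dist_eq_norm, (isometry_hyperReflect ha t).dist_eq, dist_eq_norm]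
    exact cd.norm_sub_sq x hx y hy
  isMulQuadraticOff_norm_sub_sq c := by
    refine (cd.isMulQuadraticOff_norm_sub_sq (hyperReflect a t c)).congr fun x _ => ?_
    rw [← dist_eq_norm, ← dist_eq_norm, ← (isometry_hyperReflect ha t).dist_eq,
      hyperReflect_involutive ha t]
  isMulQuadraticOff_one := cd.isMulQuadraticOff_one

end MobiusChart

lemma IsMobiusHat.nonempty_mobiusChart {n : ℕ} {g : EuclHat n → EuclHat n}
    (hg : IsMobiusHat n g) : Nonempty (MobiusChart n g) := by
  obtain ⟨L, -, hL, rfl⟩ := hg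
  induction L with
  | nil => exact ⟨MobiusChart.refl n⟩
  | cons f T ih =>
    obtain ⟨cd⟩ := ih fun f hf => hL f (List.mem_cons_of_mem _ hf)
    rcases hL f List.mem_cons_self with ⟨a, r, hr, rfl⟩ | ⟨a, t, ha, rfl⟩
    · exact ⟨cd.compSphereRefl a hr.ne'⟩
    · exact ⟨cd.compHyperRefl ha t⟩

end Chart

section Quadratic

variable {V : Type*} [NormedAddCommGroup V] [InnerProductSpace ℝ V]

/-- The square of Ahlfors' bracket `[x, a]`. -/
def bracketSq (a x : V) : ℝ := 1 - 2 * ⟪x, a⟫_ℝ + ‖x‖ ^ 2 * ‖a‖ ^ 2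

lemma bracketSq_eq (a x : V) :
    bracketSq a x = (1 - ‖a‖ ^ 2) * (1 - ‖x‖ ^ 2) + ‖x - a‖ ^ 2 := by
  rw [bracketSq, norm_sub_sq_real]
  ring

lemma sq_one_sub_mul_le_bracketSq (a x : V) : (1 - ‖x‖ * ‖a‖) ^ 2 ≤ bracketSq a x := by
  have := real_inner_le_norm x a
  rw [bracketSq]
  nlinarith

lemma bracketSq_le_sq_one_add_mul (a x : V) : bracketSq a x ≤ (1 + ‖x‖ * ‖a‖) ^ 2 := by
  have := neg_le_of_abs_le (abs_real_inner_le_norm x a)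
  rw [bracketSq]
  nlinarith

lemma bracketSq_pos {a x : V} (ha : ‖a‖ < 1) (hx : ‖x‖ ≤ 1) : 0 < bracketSq a x := by
  have : ‖x‖ * ‖a‖ < 1 := by nlinarith [norm_nonneg x, norm_nonneg a]
  nlinarith [sq_one_sub_mul_le_bracketSq a x]

lemma inner_eq_zero_and_add_eq_zero_of_forall_norm_eq_one [Nontrivial V] {α c : ℝ} {β : V}
    (h : ∀ x : V, ‖x‖ = 1 → α * ‖x‖ ^ 2 + ⟪β, x⟫_ℝ + c = 0) : β = 0 ∧ α + c = 0 := by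
  have hsym : ∀ u : V, ‖u‖ = 1 → ⟪β, u⟫_ℝ = 0 ∧ α + c = 0 := by
    intro u hu
    have h₁ := h u hu
    have h₂ := h (-u) (by rw [norm_neg, hu])
    rw [norm_neg, inner_neg_right, hu] at h₂
    rw [hu] at h₁
    constructor <;> linarith
  obtain ⟨u, hu⟩ := exists_norm_eq V zero_le_one
  refine ⟨?_, (hsym u hu).2⟩
  by_contra hβ
  have hβ' : ‖β‖ ≠ 0 := norm_ne_zero_iff.2 hβ
  have := (hsym (‖β‖⁻¹ • β) (by rw [norm_smul, norm_inv, norm_norm, inv_mul_cancel₀ hβ'])).1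
  rw [real_inner_smul_right, real_inner_self_eq_norm_sq] at this
  simp [hβ'] at this

/-- Along the line `ℝ u` through `a`, the hypothesis is a quadratic inequality in `s`, whose
discriminant is `4 k (k + ‖a‖² - 1)` with `k = γ² (1 - ‖a‖²)`. -/
lemma le_one_of_forall_nonneg [Nontrivial V] {a : V} (ha : ‖a‖ < 1) {γ : ℝ} (hγ : 0 < γ)
    (h : ∀ x : V, 0 ≤ γ ^ 2 * (1 - ‖a‖ ^ 2) * (1 - ‖x‖ ^ 2) + ‖x - a‖ ^ 2) : γ ≤ 1 := by
  obtain ⟨u, hu, hua⟩ : ∃ u : V, ‖u‖ = 1 ∧ ⟪u, a⟫_ℝ = ‖a‖ := by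
    rcases eq_or_ne a 0 with rfl | ha0
    · simpa using exists_norm_eq V zero_le_one
    · have : ‖a‖ ≠ 0 := norm_ne_zero_iff.2 ha0
      refine ⟨‖a‖⁻¹ • a, by rw [norm_smul, norm_inv, norm_norm, inv_mul_cancel₀ this], ?_⟩
      rw [real_inner_smul_left, real_inner_self_eq_norm_sq]
      field_simp
  set k := γ ^ 2 * (1 - ‖a‖ ^ 2)
  have hdisc := discrim_le_zero (a := 1 - k) (b := -2 * ‖a‖) (c := k + ‖a‖ ^ 2) fun s => by
    have := h (s • u)
    rw [norm_sub_sq_real, norm_smul, real_inner_smul_left, hua, hu, Real.norm_eq_abs,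
      mul_one, sq_abs] at this
    linarith
  have hk : 0 < k := mul_pos (by positivity) (by nlinarith [norm_nonneg a])
  have hk1 : γ ^ 2 * (1 - ‖a‖ ^ 2) ≤ 1 * (1 - ‖a‖ ^ 2) := by
    rw [discrim] at hdisc
    nlinarith
  have h1a : 0 < 1 - ‖a‖ ^ 2 := by nlinarith [norm_nonneg a]
  exact (pow_le_one_iff_of_nonneg hγ.le two_ne_zero).1 (le_of_mul_le_mul_right hk1 h1a)

end Quadratic

section SignChange

variable {V : Type*} [NormedAddCommGroup V] [NormedSpace ℝ V]

lemma eq_zero_of_norm_eq_one_of_pos_of_neg {Q : V → ℝ} (hQ : Continuous Q) {D : Set V}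
    (hD : Dense D) (hpos : ∀ x ∈ D, ‖x‖ < 1 → 0 < Q x) (hneg : ∀ x ∈ D, 1 < ‖x‖ → Q x < 0)
    {ζ : V} (hζ : ‖ζ‖ = 1) : Q ζ = 0 := by
  have hclosure : ∀ {U : Set V}, IsOpen U → closure U ⊆ closure (U ∩ D) := fun hU =>
    closure_minimal (hD.open_subset_closure_inter hU) isClosed_closure
  have hin : ζ ∈ closure (ball 0 1 ∩ D) := hclosure isOpen_ball <| by
    rw [closure_ball 0 one_ne_zero, mem_closedBall_zero_iff, hζ]
  have hout : ζ ∈ closure ((closedBall 0 1)ᶜ ∩ D) := hclosure isClosed_closedBall.isOpen_compl <| by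
    rw [closure_compl, interior_closedBall 0 one_ne_zero, mem_compl_iff, mem_ball_zero_iff, hζ]
    exact lt_irrefl 1
  refine le_antisymm ?_ ?_
  · refine closure_minimal (t := {x | Q x ≤ 0}) (fun x hx => ?_)
      (isClosed_le hQ continuous_const) hout
    exact (hneg x hx.2 (not_le.1 fun h => hx.1 (mem_closedBall_zero_iff.2 h))).le
  · refine closure_minimal (t := {x | 0 ≤ Q x}) (fun x hx => ?_)
      (isClosed_le continuous_const hQ) hin
    exact (hpos x hx.2 (mem_ball_zero_iff.1 hx.1)).le

lemma exists_mem_ball_notMem [Nontrivial V] {F : Set V} (hF : F.Finite) :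
    ∃ x ∈ ball (0 : V) 1, x ∉ F := by
  obtain ⟨x, hxF, hxB⟩ := (hF.countable.dense_compl ℝ).exists_mem_open isOpen_ball
    ⟨0, mem_ball_self one_pos⟩
  exact ⟨x, hxB, hxF⟩

end SignChange

section BallChart

variable {n : ℕ}

def ballHat (n : ℕ) : Set (EuclHat n) := (↑) '' ball (0 : Eucl n) 1

lemma closure_ballHat : closure (ballHat n) = (↑) '' closedBall (0 : Eucl n) 1 := by
  refine subset_antisymm (closure_minimal ?_ ((isCompact_closedBall 0 1).image
    continuous_coe).isClosed) ?_
  · exact image_mono ball_subset_closedBall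
  · rw [← closure_ball (0 : Eucl n) one_ne_zero]
    exact image_closure_subset_closure_image continuous_coe

lemma preimage_closure_ballHat {h : EuclHat n ≃ₜ EuclHat n} (hB : h ⁻¹' ballHat n = ballHat n) :
    h ⁻¹' ((↑) '' closedBall (0 : Eucl n) 1) = (↑) '' closedBall (0 : Eucl n) 1 := by
  rw [← closure_ballHat, h.preimage_closure, hB]

lemma preimage_symm_ballHat {h : EuclHat n ≃ₜ EuclHat n} (hB : h ⁻¹' ballHat n = ballHat n) :
    h.symm ⁻¹' ballHat n = ballHat n := by
  rw [h.preimage_symm]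
  nth_rw 1 [← hB]
  exact h.image_preimage _

lemma preimage_ballHat_eq {h : EuclHat n ≃ₜ EuclHat n} {φ : Eucl n → Eucl n}
    (hφ : ∀ x ∈ ball (0 : Eucl n) 1, h x = φ x) (hbij : BijOn φ (ball 0 1) (ball 0 1)) :
    h ⁻¹' ballHat n = ballHat n := by
  have himage : h '' ballHat n = ballHat n := by
    rw [ballHat, image_image, image_congr hφ, ← image_image, hbij.image_eq]
  calc h ⁻¹' ballHat n = h ⁻¹' (h '' ballHat n) := by rw [himage]
    _ = ballHat n := h.preimage_image _

namespace MobiusChart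

variable {g : EuclHat n → EuclHat n} (cd : MobiusChart n g)

lemma dense_compl_E [Nontrivial (Eucl n)] : Dense cd.Eᶜ :=
  cd.finite_E.countable.dense_compl ℝ

lemma norm_lt_one_iff (hB : g ⁻¹' ballHat n = ballHat n) {x : Eucl n} (hx : x ∉ cd.E) :
    ‖cd.G x‖ < 1 ↔ ‖x‖ < 1 := by
  have := congrArg (↑x ∈ ·) hB
  simpa [ballHat, cd.apply_coe x hx, coe_injective.mem_set_image] using this

lemma norm_le_one_iff {h : EuclHat n ≃ₜ EuclHat n} (cd : MobiusChart n h)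
    (hB : h ⁻¹' ballHat n = ballHat n) {x : Eucl n} (hx : x ∉ cd.E) :
    ‖cd.G x‖ ≤ 1 ↔ ‖x‖ ≤ 1 := by
  have := congrArg (↑x ∈ ·) (preimage_closure_ballHat hB)
  simpa [cd.apply_coe x hx, coe_injective.mem_set_image] using this

/-- `(1 - ‖G x‖²) / μ x` is a quadratic polynomial which is positive inside the ball and negative
outside, so it vanishes on the sphere. -/
lemma exists_one_sub_norm_sq_eq [Nontrivial (Eucl n)] {h : EuclHat n ≃ₜ EuclHat n}
    (cd : MobiusChart n h) (hB : h ⁻¹' ballHat n = ballHat n) :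
    ∃ γ > 0, ∀ x ∉ cd.E, 1 - ‖cd.G x‖ ^ 2 = cd.μ x * (γ * (1 - ‖x‖ ^ 2)) := by
  obtain ⟨α, c, β, hq⟩ := cd.isMulQuadraticOff_one.const_mul_add_const_mul
    (cd.isMulQuadraticOff_norm_sub_sq 0) 1 (-1)
  have hQ : ∀ x ∉ cd.E, 1 - ‖cd.G x‖ ^ 2 = cd.μ x * (α * ‖x‖ ^ 2 + ⟪β, x⟫_ℝ + c) :=
    fun x hx => by
      have := hq x hx
      simp only [Pi.one_apply, sub_zero] at this
      linarith
  have hS : ∀ x : Eucl n, ‖x‖ = 1 → α * ‖x‖ ^ 2 + ⟪β, x⟫_ℝ + c = 0 :=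
    fun x => eq_zero_of_norm_eq_one_of_pos_of_neg
      (Q := fun x => α * ‖x‖ ^ 2 + ⟪β, x⟫_ℝ + c) (by fun_prop) cd.dense_compl_E
      (fun y hy hy1 => by
        have h1 : ‖cd.G y‖ < 1 := (cd.norm_lt_one_iff hB hy).2 hy1
        refine pos_of_mul_pos_right ?_ (cd.μ_pos y hy).le
        rw [← hQ y hy]
        nlinarith [norm_nonneg (cd.G y)])
      (fun y hy hy1 => by
        have h1 : 1 < ‖cd.G y‖ := not_le.1 fun h => hy1.not_ge ((cd.norm_le_one_iff hB hy).1 h)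
        refine neg_of_mul_neg_right ?_ (cd.μ_pos y hy).le
        rw [← hQ y hy]
        nlinarith)
  obtain ⟨hβ, hαc⟩ := inner_eq_zero_and_add_eq_zero_of_forall_norm_eq_one hS
  have hid : ∀ x ∉ cd.E, 1 - ‖cd.G x‖ ^ 2 = cd.μ x * (c * (1 - ‖x‖ ^ 2)) := fun x hx => by
    rw [hQ x hx, hβ, inner_zero_left, show α = -c by linarith]
    ring
  obtain ⟨x, hxB, hxE⟩ := exists_mem_ball_notMem cd.finite_E
  have hx1 : 0 < 1 - ‖x‖ ^ 2 := by nlinarith [norm_nonneg x, mem_ball_zero_iff.1 hxB]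
  have hGx1 : ‖cd.G x‖ < 1 := (cd.norm_lt_one_iff hB hxE).2 (mem_ball_zero_iff.1 hxB)
  have hpos : 0 < cd.μ x * (c * (1 - ‖x‖ ^ 2)) := by
    rw [← hid x hxE]
    nlinarith [norm_nonneg (cd.G x)]
  exact ⟨c, pos_of_mul_pos_left (pos_of_mul_pos_right hpos (cd.μ_pos x hxE).le) hx1.le, hid⟩

end MobiusChart

end BallChart

namespace MobiusChart

variable {n : ℕ} {g : EuclHat n → EuclHat n} [Nontrivial (Eucl n)]

/-- Letting `y → a` in `‖G x - G y‖² = μ x μ y ‖x - y‖²` gives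
`γ (1 - ‖a‖²) ‖G x‖² = μ x ‖x - a‖²`; combine with `hid`. -/
lemma mul_eq_of_apply_eq_zero (cd : MobiusChart n g) {a : Eucl n} (ha : ‖a‖ < 1)
    (hga : g a = ↑(0 : Eucl n)) (hg : ContinuousAt g a) {γ : ℝ} (hγ : 0 < γ)
    (hid : ∀ x ∉ cd.E, 1 - ‖cd.G x‖ ^ 2 = cd.μ x * (γ * (1 - ‖x‖ ^ 2)))
    {x : Eucl n} (hx : x ∉ cd.E) :
    cd.μ x * (γ ^ 2 * (1 - ‖a‖ ^ 2) * (1 - ‖x‖ ^ 2) + ‖x - a‖ ^ 2) = γ * (1 - ‖a‖ ^ 2) := by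
  set F := 𝓝[cd.Eᶜ] a
  have : F.NeBot := mem_closure_iff_nhdsWithin_neBot.1 (cd.dense_compl_E.closure_eq ▸ mem_univ a)
  have h1a : 0 < 1 - ‖a‖ ^ 2 := by nlinarith [norm_nonneg a]
  have hy : Tendsto (fun y : Eucl n => y) F (𝓝 a) := tendsto_nhdsWithin_of_tendsto_nhds tendsto_id
  have hG : Tendsto cd.G F (𝓝 0) := by
    rw [isOpenEmbedding_coe.isInducing.tendsto_nhds_iff, ← hga]
    refine (hg.tendsto.comp (continuous_coe.continuousAt.tendsto.comp hy)).congr' ?_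
    exact eventually_nhdsWithin_of_forall fun y hy => by simp [cd.apply_coe y hy]
  have hμ : Tendsto cd.μ F (𝓝 (γ * (1 - ‖a‖ ^ 2))⁻¹) := by
    have hlim := ((tendsto_const_nhds (x := (1 : ℝ))).sub (hG.norm.pow 2)).div
      (tendsto_const_nhds.mul (tendsto_const_nhds.sub (hy.norm.pow 2))) (mul_pos hγ h1a).ne'
    rw [norm_zero, zero_pow two_ne_zero, sub_zero, one_div] at hlim
    refine hlim.congr' ?_
    have hball : ∀ᶠ y in F, ‖y‖ < 1 :=
      eventually_nhdsWithin_of_eventually_nhds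
        ((isOpen_lt continuous_norm continuous_const).mem_nhds ha)
    filter_upwards [hball, self_mem_nhdsWithin] with y hy1 hyE
    have : 0 < 1 - ‖y‖ ^ 2 := by nlinarith [norm_nonneg y]
    rw [Pi.div_apply, hid y hyE]
    field_simp
  have hK : ‖cd.G x - 0‖ ^ 2 = cd.μ x * (γ * (1 - ‖a‖ ^ 2))⁻¹ * ‖x - a‖ ^ 2 := by
    refine tendsto_nhds_unique ((tendsto_const_nhds.sub hG).norm.pow 2 |>.congr' ?_)
      ((tendsto_const_nhds.mul hμ).mul ((tendsto_const_nhds.sub hy).norm.pow 2))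
    exact eventually_nhdsWithin_of_forall fun y hyE => cd.norm_sub_sq x hx y hyE
  rw [sub_zero] at hK
  have := hid x hx
  field_simp at hK
  linear_combination -(γ * (1 - ‖a‖ ^ 2)) * this - hK

lemma le_one_of_mul_eq (cd : MobiusChart n g) {a : Eucl n} (ha : ‖a‖ < 1) {γ : ℝ} (hγ : 0 < γ)
    (hK : ∀ x ∉ cd.E,
      cd.μ x * (γ ^ 2 * (1 - ‖a‖ ^ 2) * (1 - ‖x‖ ^ 2) + ‖x - a‖ ^ 2) = γ * (1 - ‖a‖ ^ 2)) :
    γ ≤ 1 := by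
  have h1a : 0 < 1 - ‖a‖ ^ 2 := by nlinarith [norm_nonneg a]
  refine le_one_of_forall_nonneg ha hγ fun x => ?_
  refine closure_minimal (s := cd.Eᶜ)
    (t := {x | 0 ≤ γ ^ 2 * (1 - ‖a‖ ^ 2) * (1 - ‖x‖ ^ 2) + ‖x - a‖ ^ 2}) (fun y hy => ?_)
    (isClosed_le continuous_const (by fun_prop))
    (cd.dense_compl_E.closure_eq ▸ mem_univ x)
  have := hK y hy
  exact (pos_of_mul_pos_right (this ▸ mul_pos hγ h1a) (cd.μ_pos y hy).le).le

/-- Applying `hid` to `g` and then to its inverse shows `γ γ' (μ z μ' (G z)) = 1`, while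
comparing distances shows that the products `μ z μ' (G z)` at two points multiply to `1`. -/
lemma mul_eq_one_of_leftInverse {g' : EuclHat n → EuclHat n} (cd : MobiusChart n g)
    (cd' : MobiusChart n g') (hinv : Function.LeftInverse g' g) {γ γ' : ℝ} (hγ : 0 < γ)
    (hγ' : 0 < γ') (hid : ∀ x ∉ cd.E, 1 - ‖cd.G x‖ ^ 2 = cd.μ x * (γ * (1 - ‖x‖ ^ 2)))
    (hid' : ∀ x ∉ cd'.E, 1 - ‖cd'.G x‖ ^ 2 = cd'.μ x * (γ' * (1 - ‖x‖ ^ 2))) :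
    γ * γ' = 1 := by
  set bad := cd.E ∪ (cd.Eᶜ ∩ cd.G ⁻¹' cd'.E)
  have hbad : bad.Finite := cd.finite_E.union (cd.finite_compl_inter_preimage cd'.finite_E)
  have hgood : ∀ z ∉ bad, z ∉ cd.E ∧ cd.G z ∉ cd'.E := fun z hz =>
    ⟨fun h => hz (Or.inl h), fun h => hz (Or.inr ⟨fun h' => hz (Or.inl h'), h⟩)⟩
  have hGG : ∀ z ∉ bad, cd'.G (cd.G z) = z := fun z hz => by
    have := hinv z
    rwa [cd.apply_coe z (hgood z hz).1, cd'.apply_coe _ (hgood z hz).2, coe_eq_coe] at this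
  have hp : ∀ z ∉ bad, ‖z‖ < 1 → γ * γ' * (cd.μ z * cd'.μ (cd.G z)) = 1 := fun z hz hz1 => by
    have h1 := hid z (hgood z hz).1
    have h2 := hid' _ (hgood z hz).2
    rw [hGG z hz, h1] at h2
    have : 0 < 1 - ‖z‖ ^ 2 := by nlinarith [norm_nonneg z]
    apply mul_right_cancel₀ this.ne'
    linear_combination -h2
  have hpp : ∀ z₁ ∉ bad, ∀ z₂ ∉ bad, z₁ ≠ z₂ →
      (cd.μ z₁ * cd'.μ (cd.G z₁)) * (cd.μ z₂ * cd'.μ (cd.G z₂)) = 1 := fun z₁ h₁ z₂ h₂ hne => by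
    have h := cd'.norm_sub_sq _ (hgood z₁ h₁).2 _ (hgood z₂ h₂).2
    rw [hGG z₁ h₁, hGG z₂ h₂, cd.norm_sub_sq z₁ (hgood z₁ h₁).1 z₂ (hgood z₂ h₂).1] at h
    have : ‖z₁ - z₂‖ ^ 2 ≠ 0 := pow_ne_zero 2 (norm_ne_zero_iff.2 (sub_ne_zero.2 hne))
    apply mul_right_cancel₀ this
    linear_combination -h
  obtain ⟨z₁, hz₁B, hz₁⟩ := exists_mem_ball_notMem hbad
  obtain ⟨z₂, hz₂B, hz₂⟩ := exists_mem_ball_notMem (hbad.union (finite_singleton z₁))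
  simp only [mem_union, mem_singleton_iff, not_or] at hz₂
  have e₁ := hp z₁ hz₁ (mem_ball_zero_iff.1 hz₁B)
  have e₂ := hp z₂ hz₂.1 (mem_ball_zero_iff.1 hz₂B)
  have e := hpp z₁ hz₁ z₂ hz₂.1 (Ne.symm hz₂.2)
  have hsq : (γ * γ') ^ 2 = 1 := by
    linear_combination (-(γ * γ') ^ 2) * e + (γ * γ' * (cd.μ z₂ * cd'.μ (cd.G z₂))) * e₁ + e₂
  nlinarith [mul_pos hγ hγ']

end MobiusChart

lemma OnePoint.continuousOn_of_apply_coe_eq {X : Type*} [TopologicalSpace X]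
    {g : OnePoint X → OnePoint X} (hg : Continuous g) {U : Set X} (hU : IsOpen U) {φ : X → X}
    (hgφ : ∀ x ∈ U, g x = φ x) : ContinuousOn φ U := fun x hx => by
  refine (isOpenEmbedding_coe.isInducing.continuousAt_iff.2 ?_).continuousWithinAt
  exact (hg.comp continuous_coe).continuousAt.congr (eventually_of_mem (hU.mem_nhds hx) hgφ)

section Identities

variable {n : ℕ}

lemma continuous_bracketSq {V : Type*} [NormedAddCommGroup V] [InnerProductSpace ℝ V] (a : V) :
    Continuous (bracketSq a) := by
  unfold bracketSq
  fun_prop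

/-- The identities satisfied by `φ = A ∘ T_a`, where `T_a` is the standard Möbius self-map of the
ball sending `a` to `0` and `A` is orthogonal. -/
structure MobiusBallIdentities (φ : Eucl n → Eucl n) (a : Eucl n) : Prop where
  norm_lt_one : ‖a‖ < 1
  one_sub_norm_sq_mul : ∀ x ∈ closedBall (0 : Eucl n) 1,
    (1 - ‖φ x‖ ^ 2) * bracketSq a x = (1 - ‖a‖ ^ 2) * (1 - ‖x‖ ^ 2)
  norm_sub_sq_mul : ∀ x ∈ closedBall (0 : Eucl n) 1, ∀ y ∈ closedBall (0 : Eucl n) 1,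
    ‖φ x - φ y‖ ^ 2 * (bracketSq a x * bracketSq a y) = (1 - ‖a‖ ^ 2) ^ 2 * ‖x - y‖ ^ 2

namespace MobiusBallIdentities

variable {φ : Eucl n → Eucl n} {a : Eucl n}

lemma norm_apply_zero (hφ : MobiusBallIdentities φ a) : ‖φ 0‖ = ‖a‖ := by
  have h := hφ.one_sub_norm_sq_mul 0 (mem_closedBall_self zero_le_one)
  simp only [bracketSq, inner_zero_left, norm_zero] at h
  exact (sq_eq_sq₀ (norm_nonneg _) (norm_nonneg a)).1 (by linarith)

lemma norm_apply_lt_one (hφ : MobiusBallIdentities φ a) {x : Eucl n} (hx : ‖x‖ < 1) :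
    ‖φ x‖ < 1 := by
  have h := hφ.one_sub_norm_sq_mul x (mem_closedBall_zero_iff.2 hx.le)
  have hpos : 0 < (1 - ‖a‖ ^ 2) * (1 - ‖x‖ ^ 2) := by
    have := hφ.norm_lt_one
    apply mul_pos <;> nlinarith [norm_nonneg a, norm_nonneg x]
  have := pos_of_mul_pos_left (h ▸ hpos) (bracketSq_pos hφ.norm_lt_one hx.le).le
  nlinarith [norm_nonneg (φ x)]

lemma norm_sub_mul_le (hφ : MobiusBallIdentities φ a) {x ζ : Eucl n} (hx : ‖x‖ < 1) (hζ : ‖ζ‖ ≤ 1) :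
    ‖φ x - φ ζ‖ * (1 - ‖x‖ ^ 2) * (1 - ‖a‖) ≤ ‖x - ζ‖ * (1 - ‖φ x‖ ^ 2) * (1 + ‖a‖) := by
  have ha := hφ.norm_lt_one
  have hDx : 0 < bracketSq a x := bracketSq_pos ha hx.le
  have hDx' : bracketSq a x ≤ (1 + ‖a‖) ^ 2 :=
    (bracketSq_le_sq_one_add_mul a x).trans (by gcongr; nlinarith [norm_nonneg x, norm_nonneg a])
  have hDζ : (1 - ‖a‖) ^ 2 ≤ bracketSq a ζ :=
    le_trans (by gcongr; nlinarith [norm_nonneg ζ, norm_nonneg a])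
      (sq_one_sub_mul_le_bracketSq a ζ)
  have hM1 := hφ.one_sub_norm_sq_mul x (mem_closedBall_zero_iff.2 hx.le)
  have hM2 := hφ.norm_sub_sq_mul x (mem_closedBall_zero_iff.2 hx.le) ζ
    (mem_closedBall_zero_iff.2 hζ)
  have hx1 : 0 ≤ 1 - ‖x‖ ^ 2 := by nlinarith [norm_nonneg x]
  have hφx : 0 ≤ 1 - ‖φ x‖ ^ 2 := by nlinarith [hφ.norm_apply_lt_one hx, norm_nonneg (φ x)]
  refine (pow_le_pow_iff_left₀ (by have := norm_nonneg a; positivity)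
    (by have := norm_nonneg a; positivity) two_ne_zero).1 ?_
  refine le_of_mul_le_mul_right ?_ hDx
  calc (‖φ x - φ ζ‖ * (1 - ‖x‖ ^ 2) * (1 - ‖a‖)) ^ 2 * bracketSq a x
      ≤ ‖φ x - φ ζ‖ ^ 2 * (1 - ‖x‖ ^ 2) ^ 2 * bracketSq a ζ * bracketSq a x := by
        rw [mul_pow, mul_pow]; gcongr
    _ = ‖x - ζ‖ ^ 2 * ((1 - ‖a‖ ^ 2) * (1 - ‖x‖ ^ 2)) ^ 2 := by
        linear_combination (1 - ‖x‖ ^ 2) ^ 2 * hM2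
    _ = ‖x - ζ‖ ^ 2 * (1 - ‖φ x‖ ^ 2) ^ 2 * bracketSq a x * bracketSq a x := by rw [← hM1]; ring
    _ ≤ (‖x - ζ‖ * (1 - ‖φ x‖ ^ 2) * (1 + ‖a‖)) ^ 2 * bracketSq a x := by
        rw [mul_pow, mul_pow]; gcongr

lemma image_ntRegion_subset (hφ : MobiusBallIdentities φ a) {ζ : Eucl n} (hζ : ‖ζ‖ ≤ 1) (δ : ℝ) :
    φ '' ntRegion n δ ζ ⊆ ntRegion n (δ * (1 + ‖φ 0‖) / (1 - ‖φ 0‖)) (φ ζ) := by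
  rintro _ ⟨x, ⟨hxB, hxζ⟩, rfl⟩
  have hx : ‖x‖ < 1 := mem_ball_zero_iff.1 hxB
  have hφx := hφ.norm_apply_lt_one hx
  refine ⟨mem_ball_zero_iff.2 hφx, ?_⟩
  have hx2 : 0 < 1 - ‖x‖ ^ 2 := by nlinarith [norm_nonneg x]
  have hφx2 : 0 < 1 - ‖φ x‖ ^ 2 := by nlinarith [norm_nonneg (φ x)]
  have ha : 0 < 1 - ‖a‖ := by linarith [hφ.norm_lt_one]
  rw [hφ.norm_apply_zero]
  refine lt_of_mul_lt_mul_right (a := (1 - ‖x‖ ^ 2) * (1 - ‖a‖)) ?_ (by positivity)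
  calc ‖φ x - φ ζ‖ * ((1 - ‖x‖ ^ 2) * (1 - ‖a‖))
      ≤ ‖x - ζ‖ * (1 - ‖φ x‖ ^ 2) * (1 + ‖a‖) := by linarith [hφ.norm_sub_mul_le hx hζ]
    _ < δ / 2 * (1 - ‖x‖ ^ 2) * (1 - ‖φ x‖ ^ 2) * (1 + ‖a‖) := by gcongr
    _ = _ := by field_simp

end MobiusBallIdentities

namespace MobiusChart

variable {g : EuclHat n → EuclHat n}

lemma mobiusBallIdentities [Nontrivial (Eucl n)] (cd : MobiusChart n g) (hg : Continuous g)
    {U : Set (Eucl n)} (hU : IsOpen U) (hKU : closedBall 0 1 ⊆ U) {φ : Eucl n → Eucl n}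
    (hgφ : ∀ x ∈ U, g x = φ x) {a : Eucl n} (ha : ‖a‖ < 1)
    (hid : ∀ x ∉ cd.E, 1 - ‖cd.G x‖ ^ 2 = cd.μ x * (1 - ‖x‖ ^ 2))
    (hμ : ∀ x ∉ cd.E, cd.μ x * bracketSq a x = 1 - ‖a‖ ^ 2) : MobiusBallIdentities φ a := by
  have hφG : ∀ x ∈ U, x ∉ cd.E → φ x = cd.G x := fun x hxU hx =>
    coe_injective ((hgφ x hxU).symm.trans (cd.apply_coe x hx))
  have hφc := continuousOn_of_apply_coe_eq hg hU hgφ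
  have hD := continuous_bracketSq a
  refine ⟨ha, fun x hx => ?_, fun x hx y hy => ?_⟩
  · refine EqOn.of_subset_closure (s := U ∩ cd.Eᶜ)
      (f := fun x => (1 - ‖φ x‖ ^ 2) * bracketSq a x)
      (g := fun x => (1 - ‖a‖ ^ 2) * (1 - ‖x‖ ^ 2)) (fun x hx' => ?_)
      ((continuousOn_const.sub (hφc.norm.pow 2)).mul hD.continuousOn)
      (Continuous.continuousOn (by fun_prop)) inter_subset_left
      (cd.dense_compl_E.open_subset_closure_inter hU) (hKU hx)
    obtain ⟨hxU, hxE⟩ := hx'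
    dsimp only
    rw [hφG x hxU hxE, hid x hxE, ← hμ x hxE]
    ring
  · have h1 : ContinuousOn (fun p : Eucl n × Eucl n => φ p.1) (U ×ˢ U) :=
      hφc.comp continuousOn_fst fun p hp => hp.1
    have h2 : ContinuousOn (fun p : Eucl n × Eucl n => φ p.2) (U ×ˢ U) :=
      hφc.comp continuousOn_snd fun p hp => hp.2
    have key : EqOn (fun p : Eucl n × Eucl n =>
        ‖φ p.1 - φ p.2‖ ^ 2 * (bracketSq a p.1 * bracketSq a p.2))
        (fun p => (1 - ‖a‖ ^ 2) ^ 2 * ‖p.1 - p.2‖ ^ 2) (U ×ˢ U) := by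
      refine EqOn.of_subset_closure (s := (U ×ˢ U) ∩ (cd.Eᶜ ×ˢ cd.Eᶜ)) ?_
        (((h1.sub h2).norm.pow 2).mul (by fun_prop)) (Continuous.continuousOn (by fun_prop))
        inter_subset_left ((cd.dense_compl_E.prod cd.dense_compl_E).open_subset_closure_inter
          (hU.prod hU))
      rintro ⟨x, y⟩ ⟨⟨hxU, hyU⟩, hxE, hyE⟩
      change ‖φ x - φ y‖ ^ 2 * (bracketSq a x * bracketSq a y) = (1 - ‖a‖ ^ 2) ^ 2 * ‖x - y‖ ^ 2
      rw [hφG x hxU hxE, hφG y hyU hyE, cd.norm_sub_sq x hxE y hyE]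
      linear_combination (‖x - y‖ ^ 2 * cd.μ y * bracketSq a y) * hμ x hxE +
        (‖x - y‖ ^ 2 * (1 - ‖a‖ ^ 2)) * hμ y hyE
    have := key (mk_mem_prod (hKU hx) (hKU hy))
    exact this

end MobiusChart

end Identities

section Main

variable {n : ℕ}

lemma MobiusChart.exists_one_sub_norm_sq_eq_and_le_one [Nontrivial (Eucl n)] {h : EuclHat n ≃ₜ EuclHat n}
    (cd : MobiusChart n h) (hB : h ⁻¹' ballHat n = ballHat n) {a : Eucl n} (ha : ‖a‖ < 1)
    (h0 : h a = ↑(0 : Eucl n)) :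
    ∃ γ, 0 < γ ∧ γ ≤ 1 ∧ (∀ x ∉ cd.E, 1 - ‖cd.G x‖ ^ 2 = cd.μ x * (γ * (1 - ‖x‖ ^ 2))) ∧
      ∀ x ∉ cd.E, cd.μ x * (γ ^ 2 * (1 - ‖a‖ ^ 2) * (1 - ‖x‖ ^ 2) + ‖x - a‖ ^ 2) =
        γ * (1 - ‖a‖ ^ 2) := by
  obtain ⟨γ, hγ, hid⟩ := cd.exists_one_sub_norm_sq_eq hB
  have hK := fun x (hx : x ∉ cd.E) =>
    cd.mul_eq_of_apply_eq_zero ha h0 h.continuous.continuousAt hγ hid hx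
  exact ⟨γ, hγ, cd.le_one_of_mul_eq ha hγ hK, hid, hK⟩

lemma IsMobiusBall.exists_mobiusBallIdentities [Nontrivial (Eucl n)] {φ : Eucl n → Eucl n}
    (hφ : IsMobiusBall n φ) : ∃ a, MobiusBallIdentities φ a := by
  obtain ⟨⟨U, hU, hKU, g, hg, hgφ⟩, hbij⟩ := hφ
  obtain ⟨h, rfl, hh⟩ := hg.exists_homeomorph
  have hBU : ball (0 : Eucl n) 1 ⊆ U := ball_subset_closedBall.trans hKU
  have hB := preimage_ballHat_eq (fun x hx => hgφ x (hBU hx)) hbij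
  obtain ⟨a, ha, hφa⟩ := hbij.surjOn (mem_ball_self one_pos)
  have hφ0 : φ 0 ∈ ball (0 : Eucl n) 1 := hbij.mapsTo (mem_ball_self one_pos)
  obtain ⟨cd⟩ := hg.nonempty_mobiusChart
  obtain ⟨cd'⟩ := hh.nonempty_mobiusChart
  obtain ⟨γ, hγ, hγ1, hid, hK⟩ :=
    cd.exists_one_sub_norm_sq_eq_and_le_one hB (mem_ball_zero_iff.1 ha) (by rw [hgφ a (hBU ha), hφa])
  obtain ⟨γ', hγ', hγ'1, hid', -⟩ := cd'.exists_one_sub_norm_sq_eq_and_le_one (preimage_symm_ballHat hB)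
    (mem_ball_zero_iff.1 hφ0) (by rw [← hgφ 0 (hBU (mem_ball_self one_pos)), h.symm_apply_apply])
  have hγγ' := cd.mul_eq_one_of_leftInverse cd' h.symm_apply_apply hγ hγ' hid hid'
  obtain rfl : γ = 1 := by nlinarith
  refine ⟨a, cd.mobiusBallIdentities h.continuous hU hKU hgφ (mem_ball_zero_iff.1 ha)
    (fun x hx => by simpa using hid x hx) fun x hx => ?_⟩
  rw [bracketSq_eq]
  simpa using hK x hx

end Main

theorem mobius_image_ntRegion_subset_general (n : ℕ)
    (φ : Eucl n → Eucl n) (hφ : IsMobiusBall n φ)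
    (ζ : Eucl n) (hζ : ζ ∈ uSphere n) (δ : ℝ) :
    φ '' ntRegion n δ ζ ⊆
      ntRegion n (δ * (1 + ‖φ 0‖) / (1 - ‖φ 0‖)) (φ ζ) := by
  have hζ1 : ‖ζ‖ = 1 := mem_sphere_zero_iff_norm.1 hζ
  have : Nontrivial (Eucl n) := nontrivial_of_ne ζ 0 (ne_zero_of_norm_ne_zero (by simp [hζ1]))
  obtain ⟨a, ha⟩ := hφ.exists_mobiusBallIdentities
  exact ha.image_ntRegion_subset hζ1.le δ

/-- If `φ ∈ Möb(B)`, `ζ ∈ S` and `δ > 1`, then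
`φ(Γ_δ(ζ)) ⊆ Γ_{δ̃}(φ(ζ))` with `δ̃ = δ(1+|φ(0)|)/(1−|φ(0)|)`. -/
theorem mobius_image_ntRegion_subset (n : ℕ) (hn : 2 ≤ n)
    (φ : Eucl n → Eucl n) (hφ : IsMobiusBall n φ)
    (ζ : Eucl n) (hζ : ζ ∈ uSphere n) (δ : ℝ) (hδ : 1 < δ) :
    φ '' ntRegion n δ ζ ⊆
      ntRegion n (δ * (1 + ‖φ 0‖) / (1 - ‖φ 0‖)) (φ ζ) :=
  mobius_image_ntRegion_subset_general n φ hφ ζ hζ δ
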